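/- arXiv:1503.05445 — 5 statements merged into one kernel-verified Lean document; each statement's English description precedes it below -/
import Mathlib

section
/- If the loop L(I, G, T, A) is unsafe — i.e., there is a finite trace x₀, ..., xₙ with I(x₀), T(xᵢ, xᵢ₊₁) and G(xᵢ) for i < n, ¬G(xₙ), and ¬A(xₙ) — then there exists a danger invariant (D, R): a predicate D and a function R : X → ℤ satisfying (1) ∃ x₀, I(x₀) ∧ D(x₀); (2) ∀ x, D(x) ∧ G(x) → R(x) > 0 ∧ ∃ x', T(x,x') ∧ D(x') ∧ R(x') < R(x); (3) ∀ x, D(x) ∧ ¬G(x) → ¬A(x). -/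
/-!
Let `D` be the set of states from which the loop can exit in a state violating `A`, and let
`R x` be the least number of iterations needed to do so. A guarded state in `D` needs at least one
more iteration, and one of its successors needs one fewer; an unguarded state in `D` is itself the
violating exit. Taking the least number makes `R` well defined even if the witnessing trace
revisits states.
-/

section

variable {X : Type*}

inductive ReachesUnsafeIn (G A : X → Prop) (T : X → X → Prop) : ℕ → X → Prop
  | exit {x : X} : ¬ G x → ¬ A x → ReachesUnsafeIn G A T 0 x
  | step {n : ℕ} {x x' : X} : G x → T x x' → ReachesUnsafeIn G A T n x' →
      ReachesUnsafeIn G A T (n + 1) x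

def IsDangerInvariant (I G A : X → Prop) (T : X → X → Prop) (D : X → Prop) (R : X → ℤ) : Prop :=
  (∃ x₀, I x₀ ∧ D x₀) ∧
    (∀ x, D x ∧ G x → R x > 0 ∧ ∃ x', T x x' ∧ D x' ∧ R x' < R x) ∧
    (∀ x, D x ∧ ¬ G x → ¬ A x)

namespace ReachesUnsafeIn

variable {G A : X → Prop} {T : X → X → Prop}

theorem of_trace {n : ℕ} {x : ℕ → X} (hstep : ∀ i < n, T (x i) (x (i + 1)) ∧ G (x i))
    (hG : ¬ G (x n)) (hA : ¬ A (x n)) : ReachesUnsafeIn G A T n (x 0) := by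
  induction n generalizing x with
  | zero => exact exit hG hA
  | succ n ih =>
    have htail : ReachesUnsafeIn G A T n (x 1) :=
      ih (x := fun i => x (i + 1)) (fun i hi => hstep (i + 1) (by omega)) hG hA
    exact step (hstep 0 n.succ_pos).2 (hstep 0 n.succ_pos).1 htail

theorem zero_iff {x : X} : ReachesUnsafeIn G A T 0 x ↔ ¬ G x ∧ ¬ A x :=
  ⟨fun | exit hG hA => ⟨hG, hA⟩, fun ⟨hG, hA⟩ => exit hG hA⟩

theorem eq_zero_of_not_guard {n : ℕ} {x : X} (hx : ReachesUnsafeIn G A T n x) (hG : ¬ G x) :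
    n = 0 := by
  cases hx with
  | exit => rfl
  | step hGx => exact absurd hGx hG

theorem exists_of_succ {n : ℕ} {x : X} (hx : ReachesUnsafeIn G A T (n + 1) x) :
    ∃ x', T x x' ∧ ReachesUnsafeIn G A T n x' := by
  cases hx with
  | step _ hT hx' => exact ⟨_, hT, hx'⟩

/-- `0` when `x` cannot reach an unsafe exit at all (`sInf ∅ = 0`). -/
noncomputable def rank (G A : X → Prop) (T : X → X → Prop) (x : X) : ℕ :=
  sInf {n | ReachesUnsafeIn G A T n x}

theorem rank_spec {n : ℕ} {x : X} (hx : ReachesUnsafeIn G A T n x) :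
    ReachesUnsafeIn G A T (rank G A T x) x :=
  Nat.sInf_mem (s := {n | ReachesUnsafeIn G A T n x}) ⟨n, hx⟩

theorem rank_le {n : ℕ} {x : X} (hx : ReachesUnsafeIn G A T n x) : rank G A T x ≤ n :=
  Nat.sInf_le hx

theorem isDangerInvariant {I : X → Prop} {x₀ : X} (hI : I x₀) {n : ℕ}
    (h₀ : ReachesUnsafeIn G A T n x₀) :
    IsDangerInvariant I G A T (fun x => ∃ n, ReachesUnsafeIn G A T n x)
      (fun x => rank G A T x) := by
  refine ⟨⟨x₀, hI, n, h₀⟩, ?_, ?_⟩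
  · rintro x ⟨⟨m, hm⟩, hG⟩
    have hx := rank_spec hm
    obtain ⟨k, hk⟩ : ∃ k, rank G A T x = k + 1 :=
      Nat.exists_eq_succ_of_ne_zero fun h0 => (zero_iff.mp (h0 ▸ hx)).1 hG
    obtain ⟨x', hT, hx'⟩ := exists_of_succ (hk ▸ hx)
    have hle := rank_le hx'
    dsimp only
    exact ⟨by omega, x', hT, ⟨k, hx'⟩, by omega⟩
  · rintro x ⟨⟨m, hm⟩, hG⟩
    exact (zero_iff.mp (hm.eq_zero_of_not_guard hG ▸ hm)).2

end ReachesUnsafeIn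

end

theorem danger_invariant_complete {X : Type*} (I G A : X → Prop) (T : X → X → Prop)
    (h : ∃ (n : ℕ) (x : ℕ → X), I (x 0) ∧ (∀ i < n, T (x i) (x (i+1)) ∧ G (x i)) ∧
      ¬ G (x n) ∧ ¬ A (x n)) :
    ∃ (D : X → Prop) (R : X → ℤ),
      (∃ x₀, I x₀ ∧ D x₀) ∧
      (∀ x, D x ∧ G x → R x > 0 ∧ ∃ x', T x x' ∧ D x' ∧ R x' < R x) ∧
      (∀ x, D x ∧ ¬ G x → ¬ A x) := by
  obtain ⟨n, x, hI, hstep, hG, hA⟩ := h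
  exact ⟨_, _, ReachesUnsafeIn.isDangerInvariant hI (ReachesUnsafeIn.of_trace hstep hG hA)⟩
end

section
/- A loop cannot have both a safety invariant and a danger invariant: if S satisfies the safety invariant conditions and (D, R) satisfies the danger invariant conditions for the same loop L(I, G, T, A), then we obtain a contradiction. -/
/-! A state satisfying both invariants can never leave the loop: on exit the safety invariant
yields `A` and the danger invariant yields `¬ A`. So each such state has a successor satisfying
both invariants with a smaller positive rank `R`, an infinite descent in `ℕ` starting from the
initial state supplied by the danger invariant. -/

theorem not_of_forall_exists_lt_of_pos {X : Type*} {P : X → Prop} (R : X → ℤ)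
    (descent : ∀ x, P x → 0 < R x ∧ ∃ y, P y ∧ R y < R x) (x : X) : ¬ P x := by
  induction x using (measure fun x => (R x).toNat).wf.induction with
  | h x ih =>
    intro hx
    obtain ⟨hpos, y, hy, hlt⟩ := descent x hx
    exact ih y (show (R y).toNat < (R x).toNat by omega) hy

section Loop

variable {X : Type*} (I G A : X → Prop) (T : X → X → Prop)

structure IsSafetyInvariant (S : X → Prop) : Prop where
  init : ∀ x, I x → S x
  step : ∀ x x', S x ∧ G x ∧ T x x' → S x'
  exit : ∀ x, S x ∧ ¬ G x → A x

structure IsDangerInvariant_s4 (D : X → Prop) (R : X → ℤ) : Prop where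
  init : ∃ x₀, I x₀ ∧ D x₀
  step : ∀ x, D x ∧ G x → R x > 0 ∧ ∃ x', T x x' ∧ D x' ∧ R x' < R x
  exit : ∀ x, D x ∧ ¬ G x → ¬ A x

variable {I G A T} {S D : X → Prop} {R : X → ℤ}

theorem IsSafetyInvariant.descent_inter (hS : IsSafetyInvariant I G A T S)
    (hD : IsDangerInvariant_s4 I G A T D R) (x : X) (hx : S x ∧ D x) :
    0 < R x ∧ ∃ x', (S x' ∧ D x') ∧ R x' < R x := by
  obtain ⟨hSx, hDx⟩ := hx
  by_cases hG : G x
  · obtain ⟨hpos, x', hT, hDx', hlt⟩ := hD.step x ⟨hDx, hG⟩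
    exact ⟨hpos, x', ⟨hS.step x x' ⟨hSx, hG, hT⟩, hDx'⟩, hlt⟩
  · exact (hD.exit x ⟨hDx, hG⟩ (hS.exit x ⟨hSx, hG⟩)).elim

theorem IsSafetyInvariant.not_isDangerInvariant (hS : IsSafetyInvariant I G A T S) :
    ¬ IsDangerInvariant_s4 I G A T D R := by
  intro hD
  obtain ⟨x₀, hI, hDx₀⟩ := hD.init
  exact not_of_forall_exists_lt_of_pos R (hS.descent_inter hD) x₀ ⟨hS.init x₀ hI, hDx₀⟩

end Loop

theorem no_safety_and_danger {X : Type*} (I G A : X → Prop) (T : X → X → Prop)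
    (S D : X → Prop) (R : X → ℤ)
    (hS1 : ∀ x, I x → S x)
    (hS2 : ∀ x x', S x ∧ G x ∧ T x x' → S x')
    (hS3 : ∀ x, S x ∧ ¬ G x → A x)
    (hD1 : ∃ x₀, I x₀ ∧ D x₀)
    (hD2 : ∀ x, D x ∧ G x → R x > 0 ∧ ∃ x', T x x' ∧ D x' ∧ R x' < R x)
    (hD3 : ∀ x, D x ∧ ¬ G x → ¬ A x) :
    False :=
  IsSafetyInvariant.not_isDangerInvariant ⟨hS1, hS2, hS3⟩ ⟨hD1, hD2, hD3⟩
end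

section
/- If the state space X is finite and the loop has no safety invariant, then it has a danger invariant. Equivalently, over a finite state space, for every loop L(I, G, T, A), either there exists a safety invariant S or there exists a danger invariant (D, R) (as in the generalised safety formula [GS]). -/
/-!
Let `D` be the set of states from which an error trace exists: finitely many guarded transitions
followed by an exit in a state violating `A`. If some initial state lies in `D`, then `D` together
with the length of a shortest error trace is a danger invariant, since a shortest trace from a
guarded state continues through a successor with a strictly shorter one. Otherwise the complement
of `D` contains every initial state and is a safety invariant.
-/

section

variable {X : Type*}

def IsSafetyInvariant_s5 (I G A : X → Prop) (T : X → X → Prop) (S : X → Prop) : Prop :=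
  (∀ x, I x → S x) ∧
  (∀ x x', S x ∧ G x ∧ T x x' → S x') ∧
  (∀ x, S x ∧ ¬ G x → A x)

inductive ErrorTrace (G A : X → Prop) (T : X → X → Prop) : ℕ → X → Prop
  | exit {x : X} : ¬ G x → ¬ A x → ErrorTrace G A T 0 x
  | step {n : ℕ} {x x' : X} : G x → T x x' → ErrorTrace G A T n x' → ErrorTrace G A T (n + 1) x

section

variable (G A : X → Prop) (T : X → X → Prop)

def ReachesError (x : X) : Prop :=
  ∃ n, ErrorTrace G A T n x

/-- Is `0` when `x` has no error trace, as `sInf ∅ = 0`. -/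
noncomputable def errorDistance (x : X) : ℕ :=
  sInf {n | ErrorTrace G A T n x}

variable {G A T}

theorem errorTrace_errorDistance {x : X} (h : ReachesError G A T x) :
    ErrorTrace G A T (errorDistance G A T x) x :=
  Nat.sInf_mem h

theorem errorDistance_le {n : ℕ} {x : X} (h : ErrorTrace G A T n x) :
    errorDistance G A T x ≤ n :=
  Nat.sInf_le h

theorem not_apply_of_reachesError {x : X} (hx : ReachesError G A T x) (hG : ¬ G x) : ¬ A x := by
  obtain ⟨n, hn⟩ := hx
  cases hn with
  | exit _ hA => exact hA
  | step hG' _ _ => exact absurd hG' hG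

theorem exists_errorDistance_lt {x : X} (hx : ReachesError G A T x) (hG : G x) :
    0 < errorDistance G A T x ∧ ∃ x', T x x' ∧ ReachesError G A T x' ∧
      errorDistance G A T x' < errorDistance G A T x := by
  have hmin := errorTrace_errorDistance hx
  generalize errorDistance G A T x = d at hmin ⊢
  cases hmin with
  | exit hG' _ => exact absurd hG hG'
  | @step n _ x' _ hT hx' =>
    exact ⟨n.succ_pos, x', hT, ⟨n, hx'⟩, Nat.lt_succ_of_le (errorDistance_le hx')⟩

theorem isDangerInvariant_reachesError {I : X → Prop} (hI : ∃ x₀, I x₀ ∧ ReachesError G A T x₀) :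
    IsDangerInvariant I G A T (ReachesError G A T) (fun x => errorDistance G A T x) := by
  refine ⟨hI, fun x ⟨hx, hG⟩ => ?_, fun x ⟨hx, hG⟩ => not_apply_of_reachesError hx hG⟩
  obtain ⟨hpos, x', hT, hx', hlt⟩ := exists_errorDistance_lt hx hG
  exact ⟨Int.natCast_pos.mpr hpos, x', hT, hx', Int.ofNat_lt.mpr hlt⟩

theorem isSafetyInvariant_not_reachesError {I : X → Prop} (hI : ∀ x, I x → ¬ ReachesError G A T x) :
    IsSafetyInvariant_s5 I G A T (fun x => ¬ ReachesError G A T x) := by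
  refine ⟨hI, ?_, ?_⟩
  · rintro x x' ⟨hx, hG, hT⟩ ⟨n, hn⟩
    exact hx ⟨n + 1, .step hG hT hn⟩
  · rintro x ⟨hx, hG⟩
    by_contra hA
    exact hx ⟨0, .exit hG hA⟩

end

end

theorem safety_or_danger_finite_general {X : Type*}
    (I G A : X → Prop) (T : X → X → Prop) :
    (∃ S : X → Prop,
      (∀ x, I x → S x) ∧
      (∀ x x', S x ∧ G x ∧ T x x' → S x') ∧
      (∀ x, S x ∧ ¬ G x → A x)) ∨
    (∃ (D : X → Prop) (R : X → ℤ),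
      (∃ x₀, I x₀ ∧ D x₀) ∧
      (∀ x, D x ∧ G x → R x > 0 ∧ ∃ x', T x x' ∧ D x' ∧ R x' < R x) ∧
      (∀ x, D x ∧ ¬ G x → ¬ A x)) := by
  by_cases h : ∃ x₀, I x₀ ∧ ReachesError G A T x₀
  · exact Or.inr ⟨_, _, isDangerInvariant_reachesError h⟩
  · push Not at h
    exact Or.inl ⟨_, isSafetyInvariant_not_reachesError h⟩

theorem safety_or_danger_finite {X : Type*} [Fintype X]
    (I G A : X → Prop) (T : X → X → Prop)
    [DecidablePred I] [DecidablePred G] [DecidablePred A] :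
    (∃ S : X → Prop,
      (∀ x, I x → S x) ∧
      (∀ x x', S x ∧ G x ∧ T x x' → S x') ∧
      (∀ x, S x ∧ ¬ G x → A x)) ∨
    (∃ (D : X → Prop) (R : X → ℤ),
      (∃ x₀, I x₀ ∧ D x₀) ∧
      (∀ x, D x ∧ G x → R x > 0 ∧ ∃ x', T x x' ∧ D x' ∧ R x' < R x) ∧
      (∀ x, D x ∧ ¬ G x → ¬ A x)) :=
  safety_or_danger_finite_general I G A T
end

section
/- A partial danger invariant does not guarantee a bug: there exists a loop L(I, G, T, A) and a predicate D satisfying the partial danger conditions (∃ x₀, I(x₀) ∧ D(x₀); ∀ x, D(x) ∧ G(x) → ∃ x', T(x,x') ∧ D(x'); ∀ x, D(x) ∧ ¬G(x) → ¬A(x)) such that the loop is safe, i.e., no finite trace from an initial state exits the loop violating the assertion. -/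
/-!
A partial danger invariant only promises that the loop *can keep going* inside `D`; it says nothing
about the loop ever leaving. Here `D := True` works because every guarded state has a successor,
while the loop is safe because `x = 0` is an inductive invariant that forces the guard `x < 10`,
so no trace ever exits the loop.
-/

section LoopSemantics

variable {σ : Type*} (I G A : σ → Prop) (T : σ → σ → Prop)

def IsPartialDangerInvariant (D : σ → Prop) : Prop :=
  (∃ s₀, I s₀ ∧ D s₀) ∧ (∀ s, D s ∧ G s → ∃ s', T s s' ∧ D s') ∧ (∀ s, D s ∧ ¬ G s → ¬ A s)

def IsSafe : Prop :=
  ¬ ∃ (n : ℕ) (x : ℕ → σ), I (x 0) ∧ (∀ i < n, G (x i) ∧ T (x i) (x (i + 1))) ∧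
    ¬ G (x n) ∧ ¬ A (x n)

theorem isPartialDangerInvariant_true_of_total (hI : ∃ s, I s) (hT : ∀ s, G s → ∃ s', T s s')
    (hA : ∀ s, ¬ G s → ¬ A s) :
    IsPartialDangerInvariant I G A T (fun _ => True) :=
  ⟨hI.imp fun _ h => ⟨h, trivial⟩,
    fun s ⟨_, hs⟩ => (hT s hs).imp fun _ h => ⟨h, trivial⟩,
    fun s ⟨_, hs⟩ => hA s hs⟩

variable {T} in
theorem trace_apply_of_invariant {P : σ → Prop} (hT : ∀ s s', P s → T s s' → P s')
    {x : ℕ → σ} {n : ℕ} (hx : ∀ i < n, T (x i) (x (i + 1))) (h0 : P (x 0)) : P (x n) := by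
  induction n with
  | zero => exact h0
  | succ k ih => exact hT _ _ (ih fun i hi => hx i (by omega)) (hx k k.lt_succ_self)

theorem isSafe_of_invariant (P : σ → Prop) (hI : ∀ s, I s → P s)
    (hT : ∀ s s', P s → T s s' → P s') (hG : ∀ s, P s → G s) : IsSafe I G A T := by
  rintro ⟨n, x, h0, hx, hexit, -⟩
  exact hexit <| hG _ <| trace_apply_of_invariant hT (fun i hi => (hx i hi).2) (hI _ h0)

end LoopSemantics

namespace StuckLoop

def init (s : ℤ × ℤ) : Prop := s.1 = 0 ∧ s.2 = 0

def guard (s : ℤ × ℤ) : Prop := s.1 < 10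

def step (s s' : ℤ × ℤ) : Prop := s'.1 = s.1 ∧ s'.2 = s.2 + 1

theorem isPartialDangerInvariant_true :
    IsPartialDangerInvariant init guard guard step (fun _ => True) :=
  isPartialDangerInvariant_true_of_total _ _ _ _ ⟨(0, 0), rfl, rfl⟩
    (fun s _ => ⟨(s.1, s.2 + 1), rfl, rfl⟩) (fun _ h => h)

theorem isSafe : IsSafe init guard guard step :=
  isSafe_of_invariant _ _ _ _ (fun s => s.1 = 0) (fun _ h => h.1)
    (fun _ _ h hstep => hstep.1.trans h) (fun s h => show s.1 < 10 by omega)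

end StuckLoop

theorem partial_danger_not_sound :
    ∃ (I G A : ℤ × ℤ → Prop) (T : ℤ × ℤ → ℤ × ℤ → Prop) (D : ℤ × ℤ → Prop),
      I = (fun s => s.1 = 0 ∧ s.2 = 0) ∧
      G = (fun s => s.1 < 10) ∧
      T = (fun s s' => s'.1 = s.1 ∧ s'.2 = s.2 + 1) ∧
      A = (fun s => s.1 < 10) ∧
      ((∃ s₀, I s₀ ∧ D s₀) ∧
       (∀ s, D s ∧ G s → ∃ s', T s s' ∧ D s') ∧
       (∀ s, D s ∧ ¬ G s → ¬ A s)) ∧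
      ¬ (∃ (n : ℕ) (x : ℕ → ℤ × ℤ), I (x 0) ∧ (∀ i < n, G (x i) ∧ T (x i) (x (i+1))) ∧
          ¬ G (x n) ∧ ¬ A (x n)) := by
  open StuckLoop in
  exact ⟨init, guard, guard, step, fun _ => True, rfl, rfl, rfl, rfl,
    isPartialDangerInvariant_true, isSafe⟩
end

section
/- A BMC counterexample yields a danger invariant: if x₀, ..., xₙ is a finite sequence of pairwise distinct states with I(x₀), G(xᵢ) ∧ T(xᵢ, xᵢ₊₁) for all i < n, ¬G(xₙ), and ¬A(xₙ), then D(x) := (∃ i ≤ n, x = xᵢ) together with R(x) := n − (the index of x in the sequence, or 0 if x is not in the sequence) is a danger invariant for L(I, G, T, A). -/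
theorem bmc_counterexample_yields_danger_general {X : Type*}
    (I G A : X → Prop) (T : X → X → Prop)
    (n : ℕ) (x : ℕ → X)
    (hI : I (x 0))
    (hstep : ∀ i < n, G (x i) ∧ T (x i) (x (i+1)))
    (hGn : ¬ G (x n)) (hAn : ¬ A (x n))
    (D : X → Prop) (R : X → ℤ)
    (hD : ∀ s, D s ↔ ∃ i ≤ n, s = x i)
    (hR : ∀ i ≤ n, R (x i) = (n : ℤ) - i) :
    (∃ x₀, I x₀ ∧ D x₀) ∧
    (∀ s, D s ∧ G s → R s > 0 ∧ ∃ s', T s s' ∧ D s' ∧ R s' < R s) ∧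
    (∀ s, D s ∧ ¬ G s → ¬ A s) := by
  have hD_x : ∀ i ≤ n, D (x i) := fun i hi => (hD _).2 ⟨i, hi, rfl⟩
  refine ⟨⟨x 0, hI, hD_x 0 n.zero_le⟩, ?_, ?_⟩
  · rintro s ⟨hDs, hGs⟩
    obtain ⟨i, hin, rfl⟩ := (hD s).1 hDs
    have hi : i < n := lt_of_le_of_ne hin fun h => hGn (h ▸ hGs)
    refine ⟨by rw [hR i hin]; omega, x (i + 1), (hstep i hi).2, hD_x (i + 1) hi, ?_⟩
    rw [hR (i + 1) hi, hR i hin]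
    push_cast
    omega
  · rintro s ⟨hDs, hGs⟩
    obtain ⟨i, hin, rfl⟩ := (hD s).1 hDs
    obtain hi | rfl := hin.lt_or_eq
    · exact absurd (hstep i hi).1 hGs
    · exact hAn

theorem bmc_counterexample_yields_danger {X : Type*} [DecidableEq X]
    (I G A : X → Prop) (T : X → X → Prop)
    (n : ℕ) (x : ℕ → X)
    (hdist : ∀ i j, i ≤ n → j ≤ n → x i = x j → i = j)
    (hI : I (x 0))
    (hstep : ∀ i < n, G (x i) ∧ T (x i) (x (i+1)))
    (hGn : ¬ G (x n)) (hAn : ¬ A (x n))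
    (D : X → Prop) (R : X → ℤ)
    (hD : ∀ s, D s ↔ ∃ i ≤ n, s = x i)
    (hR : ∀ i ≤ n, R (x i) = (n : ℤ) - i)
    (hR0 : ∀ s, (¬ ∃ i ≤ n, s = x i) → R s = 0) :
    (∃ x₀, I x₀ ∧ D x₀) ∧
    (∀ s, D s ∧ G s → R s > 0 ∧ ∃ s', T s s' ∧ D s' ∧ R s' < R s) ∧
    (∀ s, D s ∧ ¬ G s → ¬ A s) :=
  bmc_counterexample_yields_danger_general I G A T n x hI hstep hGn hAn D R hD hR
end
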